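/- arXiv:2312.01565 — 8 statements merged into one kernel-verified Lean document; each statement's English description precedes it below -/
import Mathlib

section
/- Let L = U Σ V' be a compact rank-K singular value decomposition of L = D^{-1/2} Π Θ', where U'U = I_K. Define U_τ = D^{1/2} U. If there exists an index set I of size K with Π(I,:) = I_K (the identity), then U_τ = Π U_τ(I,:), i.e., every row of U_τ is the corresponding row of Π times the K×K matrix formed by the rows of U_τ indexed by I. -/
open Matrix

lemma submatrix_mul_left {N K : ℕ} (I : Fin K → Fin N)
    (M : Matrix (Fin N) (Fin K) ℝ) (B : Matrix (Fin K) (Fin K) ℝ) :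
    (M * B).submatrix I id = M.submatrix I id * B := by
  ext i j
  simp [Matrix.mul_apply, Matrix.submatrix_apply]

/-- ideal simplex structure: `U_τ = Π U_τ(I,:)` where
`U_τ = D^{1/2} U` and `U` are the top-`K` left singular vectors of
`L = D^{-1/2} Π Θᵀ`, and `Π(I,:) = I_K`. -/
theorem ideal_simplex {N J K : ℕ}
    (Pm : Matrix (Fin N) (Fin K) ℝ) (Th : Matrix (Fin J) (Fin K) ℝ)
    (d : Fin N → ℝ) (hd : ∀ i, 0 < d i)
    (U : Matrix (Fin N) (Fin K) ℝ) (S : Matrix (Fin K) (Fin K) ℝ)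
    (V : Matrix (Fin J) (Fin K) ℝ)
    (hPrank : Pm.rank = K) (hTrank : Th.rank = K)
    (hSVD : Matrix.diagonal (fun i => (Real.sqrt (d i))⁻¹) * Pm * Thᵀ = U * S * Vᵀ)
    (hU : Uᵀ * U = 1) (hV : Vᵀ * V = 1)
    (hSdiag : ∃ s : Fin K → ℝ, S = Matrix.diagonal s) (hSinv : IsUnit S)
    (I : Fin K → Fin N) (hI : Function.Injective I)
    (hpure : Pm.submatrix I id = 1) :
    Matrix.diagonal (fun i => Real.sqrt (d i)) * U =
      Pm * (Matrix.diagonal (fun i => Real.sqrt (d i)) * U).submatrix I id := by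
  obtain ⟨u, hu⟩ := hSinv
  set T : Matrix (Fin K) (Fin K) ℝ := ↑u⁻¹ with hT
  have hST : S * T = 1 := by rw [hT, ← hu]; exact u.mul_inv
  have hTS : T * S = 1 := by rw [hT, ← hu]; exact u.inv_mul
  -- U = D^{-1/2} Pm Thᵀ V T
  have hU' : U = Matrix.diagonal (fun i => (Real.sqrt (d i))⁻¹) * Pm * Thᵀ * V * T := by
    rw [hSVD]
    calc U = U * S * T := by rw [Matrix.mul_assoc, hST, Matrix.mul_one]
    _ = U * S * (Vᵀ * V) * T := by rw [hV, Matrix.mul_one]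
    _ = U * S * Vᵀ * V * T := by simp only [Matrix.mul_assoc]
  have hdd : Matrix.diagonal (fun i => Real.sqrt (d i)) *
      Matrix.diagonal (fun i => (Real.sqrt (d i))⁻¹) = 1 := by
    rw [Matrix.diagonal_mul_diagonal]
    convert Matrix.diagonal_one
    exact mul_inv_cancel₀ (Real.sqrt_ne_zero'.mpr (hd _))
  have key : Matrix.diagonal (fun i => Real.sqrt (d i)) * U = Pm * (Thᵀ * V * T) := by
    rw [hU']
    rw [show Matrix.diagonal (fun i => (Real.sqrt (d i))⁻¹) * Pm * Thᵀ * V * T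
        = Matrix.diagonal (fun i => (Real.sqrt (d i))⁻¹) * (Pm * (Thᵀ * V * T)) by
      simp only [Matrix.mul_assoc]]
    rw [← Matrix.mul_assoc, hdd, Matrix.one_mul]
  rw [key, submatrix_mul_left, hpure, Matrix.one_mul]
end

section
/- Let U ∈ ℝ^{N×K} satisfy U'U = I_K and U = E Π F U(I,:) where E is an N×N diagonal matrix with positive diagonal, F is a K×K diagonal matrix with positive diagonal, Π ∈ ℝ^{N×K} is entrywise nonnegative with full column rank, and Π(I,:) = I_K. Then (U_*(I,:) U_*(I,:)')⁻¹ 𝟙 > 0 entrywise, where U_*(i,:) = U(i,:)/‖U(i,:)‖₂ and 𝟙 is the all-ones vector. -/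
/-!
Write `C = diag(e) Π diag(f)`, an entrywise nonnegative matrix, and `W = U(I,:)`, so that
`U = C W`. Orthonormality of the columns of `U` reads `Wᵀ (CᵀC) W = 1`; hence `W` is
invertible and `(W Wᵀ)⁻¹ = CᵀC`. Row normalization gives `U_*(I,:) = D⁻¹ W` with `D` the
diagonal of the (positive) row norms of `W`, so `(U_*(I,:) U_*(I,:)ᵀ)⁻¹ = D (CᵀC) D`. This
matrix is entrywise nonnegative with positive diagonal, so each of its row sums is positive.
-/

open Matrix

namespace Matrix

section Field

variable {n K : Type*} [Fintype n] [DecidableEq n] [Field K]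

theorem inv_diagonal_inv {d : n → K} (hd : ∀ i, d i ≠ 0) :
    (diagonal d⁻¹)⁻¹ = diagonal d := by
  apply inv_eq_right_inv
  rw [diagonal_mul_diagonal, ← diagonal_one]
  congr 1
  funext i
  simp [hd i]

theorem inv_diagonal_inv_mul_mul_transpose {d : n → K} (hd : ∀ i, d i ≠ 0)
    (W : Matrix n n K) :
    (diagonal d⁻¹ * W * (diagonal d⁻¹ * W)ᵀ)⁻¹ = diagonal d * (W * Wᵀ)⁻¹ * diagonal d := by
  rw [transpose_mul, diagonal_transpose, Matrix.mul_assoc, ← Matrix.mul_assoc W,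
    ← Matrix.mul_assoc, mul_inv_rev, mul_inv_rev, inv_diagonal_inv hd, Matrix.mul_assoc]

end Field

section CommRing

variable {n R : Type*} [Fintype n] [DecidableEq n] [CommRing R]

theorem isUnit_det_of_transpose_mul_mul_eq_one {W M : Matrix n n R} (h : Wᵀ * M * W = 1) :
    IsUnit W.det ∧ IsUnit M.det := by
  have hdet := congrArg det h
  rw [det_mul, det_mul, det_transpose, det_one] at hdet
  exact ⟨IsUnit.of_mul_eq_one (M.det * W.det) (by linear_combination hdet),
    IsUnit.of_mul_eq_one (W.det * W.det) (by linear_combination hdet)⟩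

theorem inv_mul_transpose_of_transpose_mul_mul_eq_one {W M : Matrix n n R}
    (h : Wᵀ * M * W = 1) : (W * Wᵀ)⁻¹ = M := by
  have hW : W⁻¹ = Wᵀ * M := inv_eq_left_inv h
  apply inv_eq_right_inv
  rw [Matrix.mul_assoc, ← hW, mul_nonsing_inv W (isUnit_det_of_transpose_mul_mul_eq_one h).1]

end CommRing

section Real

variable {m n : Type*}

theorem of_div_sqrt_sum_sq_eq_diagonal_mul [Fintype m] [Fintype n] [DecidableEq m]
    (A : Matrix m n ℝ) :
    (of fun i j => A i j / √(∑ j', A i j' ^ 2)) =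
      diagonal (fun i => √(∑ j', A i j' ^ 2))⁻¹ * A := by
  ext i j
  simp [diagonal_mul, div_eq_inv_mul]

theorem sum_sq_row_pos_of_isUnit_det [Fintype n] [DecidableEq n] {A : Matrix n n ℝ}
    (hA : IsUnit A.det) (i : n) : 0 < ∑ j, A i j ^ 2 := by
  obtain ⟨j, hj⟩ : ∃ j, A i j ≠ 0 := by
    by_contra! h
    exact hA.ne_zero (det_eq_zero_of_row_eq_zero i h)
  exact Finset.sum_pos' (fun j _ => sq_nonneg _) ⟨j, Finset.mem_univ j, by positivity⟩

theorem transpose_mul_self_apply_nonneg [Fintype m] {C : Matrix m n ℝ}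
    (hC : ∀ i j, 0 ≤ C i j) (a b : n) : 0 ≤ (Cᵀ * C) a b :=
  Finset.sum_nonneg fun i _ => mul_nonneg (hC i a) (hC i b)

theorem transpose_mul_self_apply_self_pos [Fintype m] [Fintype n] [DecidableEq n]
    {C : Matrix m n ℝ} (hC : IsUnit (Cᵀ * C).det) (k : n) : 0 < (Cᵀ * C) k k := by
  refine (Finset.sum_nonneg fun i _ => mul_self_nonneg (C i k)).lt_of_ne fun h => ?_
  have hCk : ∀ i, C i k = 0 := fun i =>
    mul_self_eq_zero.mp ((Finset.sum_eq_zero_iff_of_nonneg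
      (fun i _ => mul_self_nonneg (C i k))).mp h.symm i (Finset.mem_univ i))
  refine hC.ne_zero (det_eq_zero_of_column_eq_zero k fun l => ?_)
  simp [mul_apply, hCk]

theorem mulVec_apply_pos [Fintype n] {A : Matrix n n ℝ} {v : n → ℝ} (hA : ∀ i j, 0 ≤ A i j)
    {k : n} (hAk : 0 < A k k) (hv : ∀ i, 0 < v i) : 0 < (A *ᵥ v) k :=
  Finset.sum_pos' (fun j _ => mul_nonneg (hA k j) (hv j).le)
    ⟨k, Finset.mem_univ k, mul_pos hAk (hv k)⟩

theorem diagonal_mul_mul_diagonal_mulVec_one_apply_pos [Fintype n] [DecidableEq n]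
    {A : Matrix n n ℝ} {d : n → ℝ} (hA : ∀ i j, 0 ≤ A i j) {k : n} (hAk : 0 < A k k)
    (hd : ∀ i, 0 < d i) : 0 < ((diagonal d * A * diagonal d) *ᵥ fun _ => 1) k := by
  have hd1 : diagonal d *ᵥ (fun _ => 1) = d := by
    ext l
    simp [mulVec_diagonal]
  rw [← mulVec_mulVec, hd1, ← mulVec_mulVec, mulVec_diagonal]
  exact mul_pos (hd k) (mulVec_apply_pos hA hAk hd)

end Real

end Matrix

theorem cone_condition_general {N K : ℕ}
    (U Pm : Matrix (Fin N) (Fin K) ℝ)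
    (e : Fin N → ℝ) (he : ∀ i, 0 < e i)
    (f : Fin K → ℝ) (hf : ∀ k, 0 < f k)
    (hnn : ∀ i k, 0 ≤ Pm i k)
    (I : Fin K → Fin N)
    (hUo : Uᵀ * U = 1)
    (hUeq : U = Matrix.diagonal e * Pm * Matrix.diagonal f * U.submatrix I id) :
    ∀ k,
      0 < (((Matrix.of fun i j => U i j / Real.sqrt (∑ j', (U i j') ^ 2)
              : Matrix (Fin N) (Fin K) ℝ).submatrix I id *
            ((Matrix.of fun i j => U i j / Real.sqrt (∑ j', (U i j') ^ 2)
              : Matrix (Fin N) (Fin K) ℝ).submatrix I id)ᵀ)⁻¹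
            *ᵥ fun _ => (1 : ℝ)) k := by
  intro k
  set C := diagonal e * Pm * diagonal f
  set W := U.submatrix I id
  set d : Fin K → ℝ := fun l => √(∑ j, W l j ^ 2)
  have hC : ∀ i j, 0 ≤ C i j := fun i j => by
    simp only [C, mul_diagonal, diagonal_mul]
    exact mul_nonneg (mul_nonneg (he i).le (hnn i j)) (hf j).le
  have hWMW : Wᵀ * (Cᵀ * C) * W = 1 :=
    calc Wᵀ * (Cᵀ * C) * W = (C * W)ᵀ * (C * W) := by
          simp only [transpose_mul, Matrix.mul_assoc]
      _ = 1 := by rw [← hUeq, hUo]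
  obtain ⟨hW, hM⟩ := isUnit_det_of_transpose_mul_mul_eq_one hWMW
  have hd : ∀ l, 0 < d l := fun l => Real.sqrt_pos.mpr (sum_sq_row_pos_of_isUnit_det hW l)
  have hUsI : (of fun i j => U i j / √(∑ j', U i j' ^ 2)).submatrix I id =
      diagonal d⁻¹ * W :=
    of_div_sqrt_sum_sq_eq_diagonal_mul W
  rw [hUsI, inv_diagonal_inv_mul_mul_transpose (fun l => (hd l).ne') W,
    inv_mul_transpose_of_transpose_mul_mul_eq_one hWMW]
  exact diagonal_mul_mul_diagonal_mulVec_one_apply_pos (transpose_mul_self_apply_nonneg hC)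
    (transpose_mul_self_apply_self_pos hM k) hd

/-- under the GoM cone structure, `(U_*(I,:) U_*(I,:)ᵀ)⁻¹ 𝟙 > 0`
entrywise, where `U_*` is the row-normalized version of `U`. -/
theorem cone_condition {N K : ℕ}
    (U Pm : Matrix (Fin N) (Fin K) ℝ)
    (e : Fin N → ℝ) (he : ∀ i, 0 < e i)
    (f : Fin K → ℝ) (hf : ∀ k, 0 < f k)
    (hnn : ∀ i k, 0 ≤ Pm i k) (hPrank : Pm.rank = K)
    (I : Fin K → Fin N) (hI : Function.Injective I)
    (hpure : Pm.submatrix I id = 1)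
    (hUo : Uᵀ * U = 1)
    (hUeq : U = Matrix.diagonal e * Pm * Matrix.diagonal f * U.submatrix I id) :
    ∀ k,
      0 < (((Matrix.of fun i j => U i j / Real.sqrt (∑ j', (U i j') ^ 2)
              : Matrix (Fin N) (Fin K) ℝ).submatrix I id *
            ((Matrix.of fun i j => U i j / Real.sqrt (∑ j', (U i j') ^ 2)
              : Matrix (Fin N) (Fin K) ℝ).submatrix I id)ᵀ)⁻¹
            *ᵥ fun _ => (1 : ℝ)) k :=
  cone_condition_general U Pm e he f hf hnn I hUo hUeq
end

section
/- With notation as in the cone lemma: U'U = I_K and U = D_τ^{-1/2} Π D_τ(I,I)^{1/2} U(I,:) with Π(I,:) = I_K. Then the inverse of the Gram matrix of the rows indexed by I satisfies (U(I,:) U(I,:)')⁻¹ = D_τ(I,I)^{1/2} Π' D_τ^{-1} Π D_τ(I,I)^{1/2}. -/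
/-!
Substituting the representation of `U` into `Uᵀ U = 1` gives `Aᵀ M A = 1`, where `A = U(I,:)` and
`M` is the claimed right-hand side. Since `A` is square, `Aᵀ M` is then also a right inverse of `A`,
so `(A Aᵀ) M = 1`.
-/

open Matrix

namespace Matrix

variable {m n R : Type*} [Fintype n] [DecidableEq n] [CommRing R]

theorem transpose_mul_self_diagonal_mul (v : n → R) (B : Matrix n m R) :
    (diagonal v * B)ᵀ * (diagonal v * B) = Bᵀ * diagonal (v * v) * B := by
  rw [transpose_mul, diagonal_transpose, Matrix.mul_assoc, ← Matrix.mul_assoc (diagonal v),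
    diagonal_mul_diagonal, Matrix.mul_assoc]
  rfl

theorem inv_mul_transpose_eq_of_transpose_mul_mul_eq_one {A M : Matrix n n R}
    (h : Aᵀ * M * A = 1) : (A * Aᵀ)⁻¹ = M := by
  have h' : A * (Aᵀ * M) = 1 := mul_eq_one_comm.mp h
  exact inv_eq_right_inv (by rwa [Matrix.mul_assoc])

end Matrix

theorem gram_inverse_formula_general {N K : ℕ}
    (U Pm : Matrix (Fin N) (Fin K) ℝ)
    (d : Fin N → ℝ) (hd : ∀ i, 0 < d i)
    (I : Fin K → Fin N)
    (hUo : Uᵀ * U = 1)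
    (hUeq : U = Matrix.diagonal (fun i => (Real.sqrt (d i))⁻¹) * Pm *
      Matrix.diagonal (fun k => Real.sqrt (d (I k))) * U.submatrix I id) :
    (U.submatrix I id * (U.submatrix I id)ᵀ)⁻¹ =
      Matrix.diagonal (fun k => Real.sqrt (d (I k))) * Pmᵀ *
        Matrix.diagonal (fun i => (d i)⁻¹) * Pm *
        Matrix.diagonal (fun k => Real.sqrt (d (I k))) := by
  set A := U.submatrix I id
  set S := Matrix.diagonal (fun k => Real.sqrt (d (I k)))
  have hsq : (fun i => (Real.sqrt (d i))⁻¹) * (fun i => (Real.sqrt (d i))⁻¹) =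
      fun i => (d i)⁻¹ := by
    funext i
    simp only [Pi.mul_apply, ← mul_inv, Real.mul_self_sqrt (hd i).le]
  apply inv_mul_transpose_eq_of_transpose_mul_mul_eq_one
  calc Aᵀ * (S * Pmᵀ * diagonal (fun i => (d i)⁻¹) * Pm * S) * A
      = (Pm * S * A)ᵀ * diagonal (fun i => (d i)⁻¹) * (Pm * S * A) := by
        simp only [S, transpose_mul, diagonal_transpose, Matrix.mul_assoc]
    _ = Uᵀ * U := by
        rw [← hsq, ← transpose_mul_self_diagonal_mul, hUeq]
        simp only [Matrix.mul_assoc]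
    _ = 1 := hUo

/-- `(U(I,:) U(I,:)ᵀ)⁻¹ = D_τ(I,I)^{1/2} Πᵀ D_τ⁻¹ Π D_τ(I,I)^{1/2}`. -/
theorem gram_inverse_formula {N K : ℕ}
    (U Pm : Matrix (Fin N) (Fin K) ℝ)
    (d : Fin N → ℝ) (hd : ∀ i, 0 < d i)
    (hnn : ∀ i k, 0 ≤ Pm i k) (hPrank : Pm.rank = K)
    (I : Fin K → Fin N) (hI : Function.Injective I)
    (hpure : Pm.submatrix I id = 1)
    (hUo : Uᵀ * U = 1)
    (hUeq : U = Matrix.diagonal (fun i => (Real.sqrt (d i))⁻¹) * Pm *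
      Matrix.diagonal (fun k => Real.sqrt (d (I k))) * U.submatrix I id) :
    (U.submatrix I id * (U.submatrix I id)ᵀ)⁻¹ =
      Matrix.diagonal (fun k => Real.sqrt (d (I k))) * Pmᵀ *
        Matrix.diagonal (fun i => (d i)⁻¹) * Pm *
        Matrix.diagonal (fun k => Real.sqrt (d (I k))) :=
  gram_inverse_formula_general U Pm d hd I hUo hUeq
end

section
/- Let Z_* = U U_*(I,:)⁻¹ D_U(I,I) D_τ(I,I)^{-1/2}, where U_* = D_U U is the row-normalized version of U (D_U diagonal with D_U(i,i) = 1/‖U(i,:)‖₂), and Y = D_o Π D_τ(I,I)^{1/2} D_U(I,I)⁻¹ satisfies U_* = Y U_*(I,:). Then for every i, Π(i,:) = Z_*(i,:)/‖Z_*(i,:)‖₁. -/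
open Matrix

/-!
Undoing the right factor of `U_* = D_o Π D_τ(I,I)^{1/2} D_U(I,I)⁻¹ U_*(I,:)` gives
`D_U Z_* = D_o Π`, so each row of `Z_*` is a positive multiple of the corresponding row of `Π`.
The multiple is positive because the row of `U_*` is nonzero, and since the rows of `Π` are
nonnegative and sum to one, normalising a row of `Z_*` in `ℓ¹` recovers the row of `Π`.
-/

lemma sum_sq_pos_of_ne_zero {ι : Type*} [Fintype ι] {v : ι → ℝ} (hv : v ≠ 0) :
    0 < ∑ j, v j ^ 2 := by
  obtain ⟨j, hj⟩ := Function.ne_iff.mp hv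
  exact Finset.sum_pos' (fun j _ => sq_nonneg _) ⟨j, Finset.mem_univ j, sq_pos_of_ne_zero hj⟩

lemma eq_div_sum_abs_of_eq_smul {ι : Type*} [Fintype ι] {p z : ι → ℝ} {c : ℝ} (hc : 0 < c)
    (hp : ∀ k, 0 ≤ p k) (hp1 : ∑ k, p k = 1) (hz : z = c • p) (k : ι) :
    p k = z k / ∑ k', |z k'| := by
  have hsum : ∑ k', |z k'| = c := by
    simp only [hz, Pi.smul_apply, smul_eq_mul, abs_mul, abs_of_pos hc, abs_of_nonneg (hp _),
      ← Finset.mul_sum, hp1, mul_one]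
  rw [hsum, hz, Pi.smul_apply, smul_eq_mul, mul_div_cancel_left₀ _ hc.ne']

lemma Matrix.mul_nonsing_inv_mul_diagonal_of_eq {m n K : Type*} [Fintype n] [DecidableEq n]
    [Field K] {A B : Matrix m n K} {S : Matrix n n K} {s t : n → K} (hs : ∀ k, s k ≠ 0)
    (ht : ∀ k, t k ≠ 0) (hS : IsUnit S)
    (hA : A = B * diagonal s * diagonal (fun k => (t k)⁻¹) * S) :
    A * S⁻¹ * (diagonal t * diagonal fun k => (s k)⁻¹) = B := by
  have hdiag : diagonal s * diagonal (fun k => (t k)⁻¹) * (diagonal t * diagonal fun k => (s k)⁻¹)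
      = 1 := by
    simp only [diagonal_mul_diagonal, ← diagonal_one]
    congr 1
    funext k
    field_simp [hs k, ht k]
  rw [hA, Matrix.mul_assoc _ S, mul_nonsing_inv _ ((isUnit_iff_isUnit_det S).mp hS),
    Matrix.mul_one, Matrix.mul_assoc, Matrix.mul_assoc, ← Matrix.mul_assoc (diagonal s), hdiag,
    Matrix.mul_one]

theorem membership_recovery_cone_general {N K : ℕ}
    (U Pm : Matrix (Fin N) (Fin K) ℝ)
    (d : Fin N → ℝ) (hd : ∀ i, 0 < d i)
    (hnn : ∀ i k, 0 ≤ Pm i k) (hrow : ∀ i, ∑ k, Pm i k = 1)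
    (I : Fin K → Fin N)
    (hrows : ∀ i, U i ≠ 0) :
    -- D_U(i,i) = 1/‖U(i,:)‖₂ and U_* = D_U U
    let DU : Fin N → ℝ := fun i => (Real.sqrt (∑ j, (U i j) ^ 2))⁻¹
    let Ustar : Matrix (Fin N) (Fin K) ℝ := Matrix.diagonal DU * U
    -- U_τ = D_τ^{1/2} U, and D_o(i,i) = 1/‖Π(i,:) U_τ(I,:)‖₂
    let Uτ : Matrix (Fin N) (Fin K) ℝ :=
      Matrix.diagonal (fun i => Real.sqrt (d i)) * U
    let Do : Fin N → ℝ := fun i =>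
      (Real.sqrt (∑ k, (∑ l, Pm i l * Uτ (I l) k) ^ 2))⁻¹
    -- hypothesis: U_* = Y U_*(I,:) with Y = D_o Π D_τ(I,I)^{1/2} D_U(I,I)⁻¹
    ∀ _hY : Ustar = Matrix.diagonal Do * Pm *
        Matrix.diagonal (fun k => Real.sqrt (d (I k))) *
        Matrix.diagonal (fun k => (DU (I k))⁻¹) * Ustar.submatrix I id,
    ∀ _hinv : IsUnit (Ustar.submatrix I id),
    let Zs : Matrix (Fin N) (Fin K) ℝ :=
      U * (Ustar.submatrix I id)⁻¹ * Matrix.diagonal (fun k => DU (I k)) *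
        Matrix.diagonal (fun k => (Real.sqrt (d (I k)))⁻¹)
    ∀ i k, Pm i k = Zs i k / (∑ k', |Zs i k'|) := by
  intro DU Ustar Uτ Do hY hinv Zs i
  have hDU : ∀ j, 0 < DU j := fun j => inv_pos.2 (Real.sqrt_pos.2 (sum_sq_pos_of_ne_zero (hrows j)))
  have hscale : diagonal DU * Zs = diagonal Do * Pm := by
    rw [← mul_nonsing_inv_mul_diagonal_of_eq (fun k => (Real.sqrt_pos.2 (hd (I k))).ne')
      (fun k => (hDU (I k)).ne') hinv hY, diagonal_mul_diagonal]
    simp only [Zs, Ustar, Matrix.mul_assoc, diagonal_mul_diagonal]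
  have hDo : Do i ≠ 0 := by
    intro h0
    obtain ⟨j, hj⟩ := Function.ne_iff.mp (hrows i)
    have hUij := congrFun (congrFun hY i) j
    simp only [Ustar, Matrix.mul_assoc, diagonal_mul, h0, zero_mul] at hUij
    exact mul_ne_zero (hDU i).ne' hj hUij
  refine eq_div_sum_abs_of_eq_smul (c := Do i / DU i)
    (div_pos ((inv_nonneg.2 (Real.sqrt_nonneg _)).lt_of_ne' hDo) (hDU i)) (hnn i) (hrow i) ?_
  funext k
  have hik := congrFun (congrFun hscale i) k
  simp only [diagonal_mul] at hik
  simp only [Pi.smul_apply, smul_eq_mul]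
  field_simp [(hDU i).ne']
  linarith

/-- membership recovery from the cone structure:
`Π(i,:) = Z_*(i,:) / ‖Z_*(i,:)‖₁` where
`Z_* = U U_*(I,:)⁻¹ D_U(I,I) D_τ(I,I)^{-1/2}`. -/
theorem membership_recovery_cone {N K : ℕ}
    (U Pm : Matrix (Fin N) (Fin K) ℝ)
    (d : Fin N → ℝ) (hd : ∀ i, 0 < d i)
    (hnn : ∀ i k, 0 ≤ Pm i k) (hrow : ∀ i, ∑ k, Pm i k = 1)
    (hPrank : Pm.rank = K)
    (I : Fin K → Fin N) (hI : Function.Injective I)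
    (hpure : Pm.submatrix I id = 1)
    (hrows : ∀ i, U i ≠ 0) :
    -- D_U(i,i) = 1/‖U(i,:)‖₂ and U_* = D_U U
    let DU : Fin N → ℝ := fun i => (Real.sqrt (∑ j, (U i j) ^ 2))⁻¹
    let Ustar : Matrix (Fin N) (Fin K) ℝ := Matrix.diagonal DU * U
    -- U_τ = D_τ^{1/2} U, and D_o(i,i) = 1/‖Π(i,:) U_τ(I,:)‖₂
    let Uτ : Matrix (Fin N) (Fin K) ℝ :=
      Matrix.diagonal (fun i => Real.sqrt (d i)) * U
    let Do : Fin N → ℝ := fun i =>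
      (Real.sqrt (∑ k, (∑ l, Pm i l * Uτ (I l) k) ^ 2))⁻¹
    -- hypothesis: U_* = Y U_*(I,:) with Y = D_o Π D_τ(I,I)^{1/2} D_U(I,I)⁻¹
    ∀ _hY : Ustar = Matrix.diagonal Do * Pm *
        Matrix.diagonal (fun k => Real.sqrt (d (I k))) *
        Matrix.diagonal (fun k => (DU (I k))⁻¹) * Ustar.submatrix I id,
    ∀ _hinv : IsUnit (Ustar.submatrix I id),
    let Zs : Matrix (Fin N) (Fin K) ℝ :=
      U * (Ustar.submatrix I id)⁻¹ * Matrix.diagonal (fun k => DU (I k)) *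
        Matrix.diagonal (fun k => (Real.sqrt (d (I k)))⁻¹)
    ∀ i k, Pm i k = Zs i k / (∑ k', |Zs i k'|) :=
  membership_recovery_cone_general U Pm d hd hnn hrow I hrows
end

section
/- Let U ∈ ℝ^{N×K} have orthonormal columns and satisfy U = D^{-1/2} Π D(I,I)^{1/2} U(I,:) where D is N×N diagonal with diagonal entries in [τ+δ_min, τ+δ_max], Π ∈ ℝ^{N×K} is row-stochastic (nonnegative rows summing to 1) with rank K, and Π(I,:) = I_K. Then for every i ∈ [N], sqrt((τ+δ_min)/(τ+δ_max)) · 1/sqrt(K λ₁(Π'Π)) ≤ ‖U(i,:)‖₂ ≤ sqrt((τ+δ_max)/(τ+δ_min)) · 1/sqrt(λ_K(Π'Π)), where λ₁ and λ_K denote the largest and smallest eigenvalues of Π'Π. -/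
/-!
Write `U = D^{-1/2} Π Y` with `Y = D(I,I)^{1/2} U(I,:)`. Orthonormality of the columns of `U`
says `Yᵀ G Y = 1` for `G = Πᵀ D⁻¹ Π`, so `Y Yᵀ = G⁻¹` and `‖U(i,:)‖² = d_i⁻¹ · π_i G⁻¹ π_iᵀ`,
where `π_i = Π(i,:)`. The quadratic form of `G` lies between `λ_K/(τ+δ_max)` and `λ₁/(τ+δ_min)`
times `‖x‖²`, hence that of `G⁻¹` between the reciprocals, and `1/K ≤ ‖π_i‖² ≤ 1` because `π_i`
is a probability vector. The same identity makes `Π` injective, which forces `λ_K > 0`.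
-/

open Matrix

section DotProduct

variable {n : Type*} [Fintype n]

theorem dotProduct_self_nonneg (x : n → ℝ) : 0 ≤ x ⬝ᵥ x :=
  Finset.sum_nonneg fun _ _ => mul_self_nonneg _

theorem dotProduct_self_pos {x : n → ℝ} (hx : x ≠ 0) : 0 < x ⬝ᵥ x :=
  (dotProduct_self_nonneg x).lt_of_ne' (mt dotProduct_self_eq_zero.1 hx)

theorem dotProduct_sq_le (x y : n → ℝ) : (x ⬝ᵥ y) ^ 2 ≤ (x ⬝ᵥ x) * (y ⬝ᵥ y) := by
  simpa only [dotProduct, sq] using Finset.sum_mul_sq_le_sq_mul_sq Finset.univ x y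

variable {p : n → ℝ}

theorem dotProduct_self_le_one_of_sum_eq_one (hp : ∀ k, 0 ≤ p k) (h1 : ∑ k, p k = 1) :
    p ⬝ᵥ p ≤ 1 := by
  simpa [dotProduct, sq, h1] using Finset.sum_sq_le_sq_sum_of_nonneg (s := .univ) fun k _ => hp k

theorem one_le_card_mul_dotProduct_self_of_sum_eq_one (h1 : ∑ k, p k = 1) :
    1 ≤ Fintype.card n * (p ⬝ᵥ p) := by
  simpa [dotProduct, sq, h1] using sq_sum_le_card_mul_sum_sq (s := .univ) (f := p)

end DotProduct

namespace Matrix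

variable {m n : Type*} [Fintype m]

theorem isHermitian_transpose_mul_self (P : Matrix m n ℝ) : (Pᵀ * P).IsHermitian := by
  simpa using isHermitian_conjTranspose_mul_self P

theorem transpose_mul_self_diagonal_mul_s8 [DecidableEq m] (s : m → ℝ) (M : Matrix m n ℝ) :
    (diagonal s * M)ᵀ * (diagonal s * M) = Mᵀ * diagonal (fun i => s i ^ 2) * M := by
  rw [transpose_mul, diagonal_transpose, Matrix.mul_assoc, ← Matrix.mul_assoc (diagonal s),
    diagonal_mul_diagonal, ← Matrix.mul_assoc]
  simp only [sq]

variable [Fintype n]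

theorem dotProduct_transpose_mul_mul_mulVec {R : Type*} [CommSemiring R]
    (A : Matrix m m R) (B : Matrix m n R) (x : n → R) :
    x ⬝ᵥ (Bᵀ * A * B) *ᵥ x = B *ᵥ x ⬝ᵥ A *ᵥ (B *ᵥ x) := by
  rw [← mulVec_mulVec, ← mulVec_mulVec, dotProduct_mulVec, vecMul_transpose]

theorem dotProduct_transpose_mul_self_mulVec (P : Matrix m n ℝ) (x : n → ℝ) :
    x ⬝ᵥ (Pᵀ * P) *ᵥ x = P *ᵥ x ⬝ᵥ P *ᵥ x := by
  rw [← mulVec_mulVec, dotProduct_mulVec, vecMul_transpose]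

section Rayleigh

open scoped MatrixOrder

variable [DecidableEq n] {A : Matrix n n ℝ}

theorem IsHermitian.dotProduct_mulVec_le (hA : A.IsHermitian) {c : ℝ}
    (hc : ∀ μ, Module.End.HasEigenvalue (toLin' A) μ → μ ≤ c) (v : n → ℝ) :
    v ⬝ᵥ A *ᵥ v ≤ c * (v ⬝ᵥ v) := by
  have hle : A ≤ algebraMap ℝ _ c := (le_algebraMap_iff_spectrum_le hA.isSelfAdjoint).2
    fun μ hμ => hc μ <| Module.End.hasEigenvalue_iff_mem_spectrum.2 <| by rwa [spectrum_toLin']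
  simpa [Algebra.algebraMap_eq_smul_one, sub_mulVec, smul_mulVec] using
    (le_iff.1 hle).dotProduct_mulVec_nonneg v

theorem IsHermitian.mul_dotProduct_le_dotProduct_mulVec (hA : A.IsHermitian) {c : ℝ}
    (hc : ∀ μ, Module.End.HasEigenvalue (toLin' A) μ → c ≤ μ) (v : n → ℝ) :
    c * (v ⬝ᵥ v) ≤ v ⬝ᵥ A *ᵥ v := by
  have hle : algebraMap ℝ _ c ≤ A := (algebraMap_le_iff_le_spectrum hA.isSelfAdjoint).2
    fun μ hμ => hc μ <| Module.End.hasEigenvalue_iff_mem_spectrum.2 <| by rwa [spectrum_toLin']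
  simpa [Algebra.algebraMap_eq_smul_one, sub_mulVec, smul_mulVec] using
    (le_iff.1 hle).dotProduct_mulVec_nonneg v

end Rayleigh

theorem pos_of_hasEigenvalue_transpose_mul_self [DecidableEq n] {P : Matrix m n ℝ}
    (hP : Function.Injective P.mulVec) {μ : ℝ}
    (hμ : Module.End.HasEigenvalue (toLin' (Pᵀ * P)) μ) : 0 < μ := by
  obtain ⟨v, hv⟩ := hμ.exists_hasEigenvector
  have hPv : P *ᵥ v ≠ 0 := fun h => hv.2 (hP (h.trans (mulVec_zero P).symm))
  have heq : P *ᵥ v ⬝ᵥ P *ᵥ v = μ * (v ⬝ᵥ v) := by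
    have hAv : (Pᵀ * P) *ᵥ v = μ • v := by simpa using hv.apply_eq_smul
    rw [← dotProduct_transpose_mul_self_mulVec, hAv, dotProduct_smul, smul_eq_mul]
  exact pos_of_mul_pos_left (heq ▸ dotProduct_self_pos hPv) (dotProduct_self_nonneg v)

theorem mulVec_injective_of_transpose_mul_mul_eq_one [DecidableEq n] {P : Matrix m n ℝ}
    {G : Matrix m m ℝ} {Y : Matrix n n ℝ}
    (hY : Yᵀ * (Pᵀ * G * P) * Y = 1) : Function.Injective P.mulVec := by
  have hL : (Y * Yᵀ * Pᵀ * G) * P = 1 := by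
    simpa only [Matrix.mul_assoc] using mul_eq_one_comm.1 hY
  refine Function.LeftInverse.injective (g := ((Y * Yᵀ * Pᵀ * G) *ᵥ ·)) fun v => ?_
  simp only [mulVec_mulVec, hL, one_mulVec]

section Congruence

variable [DecidableEq n] {A B : Matrix n n ℝ}

theorem dotProduct_self_eq_of_transpose_mul_mul_eq_one (hB : Bᵀ * A * B = 1) (x : n → ℝ) :
    x ⬝ᵥ x = B *ᵥ x ⬝ᵥ A *ᵥ (B *ᵥ x) := by
  rw [← dotProduct_transpose_mul_mul_mulVec, hB, one_mulVec]

/- If `Bᵀ A B = 1` then `B Bᵀ = A⁻¹`: the next two lemmas turn bounds on the quadratic form of `A`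
into reciprocal bounds on that of `A⁻¹`, by Cauchy–Schwarz and without inverting `A`. -/

theorem mul_dotProduct_vecMul_self_le (hB : Bᵀ * A * B = 1) {c : ℝ}
    (hA : ∀ x, c * (x ⬝ᵥ x) ≤ x ⬝ᵥ A *ᵥ x) (w : n → ℝ) :
    c * (w ᵥ* B ⬝ᵥ w ᵥ* B) ≤ w ⬝ᵥ w := by
  set t := w ᵥ* B
  have ht : t ⬝ᵥ t = w ⬝ᵥ B *ᵥ t := (dotProduct_mulVec w B t).symm
  have hBt : c * (B *ᵥ t ⬝ᵥ B *ᵥ t) ≤ t ⬝ᵥ t := by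
    rw [dotProduct_self_eq_of_transpose_mul_mul_eq_one hB t]
    exact hA (B *ᵥ t)
  have hcs := dotProduct_sq_le w (B *ᵥ t)
  rw [← ht] at hcs
  rcases le_or_gt c 0 with hc | hc
  · nlinarith [dotProduct_self_nonneg t, dotProduct_self_nonneg w]
  rcases (dotProduct_self_nonneg t).eq_or_lt with h0 | h0
  · rw [← h0, mul_zero]; exact dotProduct_self_nonneg w
  nlinarith [dotProduct_self_nonneg w]

theorem dotProduct_self_le_mul_dotProduct_vecMul (hB : Bᵀ * A * B = 1) {C : ℝ}
    (hA : ∀ x, x ⬝ᵥ A *ᵥ x ≤ C * (x ⬝ᵥ x)) (w : n → ℝ) :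
    w ⬝ᵥ w ≤ C * (w ᵥ* B ⬝ᵥ w ᵥ* B) := by
  set z := (Bᵀ * A) *ᵥ w
  have hBz : B *ᵥ z = w := by rw [mulVec_mulVec, mul_eq_one_comm.1 hB, one_mulVec]
  have hw : w ⬝ᵥ w = w ᵥ* B ⬝ᵥ z := by rw [← dotProduct_mulVec, hBz]
  have hz : z ⬝ᵥ z ≤ C * (w ⬝ᵥ w) := by
    rw [dotProduct_self_eq_of_transpose_mul_mul_eq_one hB z, hBz]
    exact hA w
  have hcs := dotProduct_sq_le (w ᵥ* B) z
  rw [← hw] at hcs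
  rcases (dotProduct_self_nonneg w).eq_or_lt with h0 | h0
  · simp [dotProduct_self_eq_zero.1 h0.symm]
  nlinarith [dotProduct_self_nonneg (w ᵥ* B), dotProduct_self_nonneg z]

end Congruence

section Diagonal

variable [DecidableEq m]

theorem sum_sq_diagonal_mul_apply (s : m → ℝ) (M : Matrix m n ℝ) (i : m) :
    ∑ j, (diagonal s * M) i j ^ 2 = s i ^ 2 * (M i ⬝ᵥ M i) := by
  simp only [diagonal_mul, dotProduct, Finset.mul_sum]
  exact Finset.sum_congr rfl fun j _ => by ring

theorem dotProduct_diagonal_mulVec_le {e : m → ℝ} {b : ℝ} (he : ∀ i, e i ≤ b) (y : m → ℝ) :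
    y ⬝ᵥ diagonal e *ᵥ y ≤ b * (y ⬝ᵥ y) := by
  simp only [mulVec_diagonal, dotProduct, Finset.mul_sum]
  refine Finset.sum_le_sum fun i _ => ?_
  nlinarith [mul_le_mul_of_nonneg_right (he i) (mul_self_nonneg (y i))]

theorem mul_dotProduct_le_dotProduct_diagonal_mulVec {e : m → ℝ} {a : ℝ} (he : ∀ i, a ≤ e i)
    (y : m → ℝ) : a * (y ⬝ᵥ y) ≤ y ⬝ᵥ diagonal e *ᵥ y := by
  simp only [mulVec_diagonal, dotProduct, Finset.mul_sum]
  refine Finset.sum_le_sum fun i _ => ?_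
  nlinarith [mul_le_mul_of_nonneg_right (he i) (mul_self_nonneg (y i))]

variable [DecidableEq n] {P : Matrix m n ℝ} {e : m → ℝ}

theorem dotProduct_transpose_mul_diagonal_mul_mulVec_le {b C : ℝ} (hb : 0 ≤ b)
    (he : ∀ i, e i ≤ b) (hC : ∀ μ, Module.End.HasEigenvalue (toLin' (Pᵀ * P)) μ → μ ≤ C)
    (x : n → ℝ) : x ⬝ᵥ (Pᵀ * diagonal e * P) *ᵥ x ≤ b * C * (x ⬝ᵥ x) := by
  have hPx := (isHermitian_transpose_mul_self P).dotProduct_mulVec_le hC x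
  rw [dotProduct_transpose_mul_self_mulVec] at hPx
  calc x ⬝ᵥ (Pᵀ * diagonal e * P) *ᵥ x = P *ᵥ x ⬝ᵥ diagonal e *ᵥ (P *ᵥ x) :=
        dotProduct_transpose_mul_mul_mulVec _ _ _
    _ ≤ b * (P *ᵥ x ⬝ᵥ P *ᵥ x) := dotProduct_diagonal_mulVec_le he _
    _ ≤ b * C * (x ⬝ᵥ x) := by rw [mul_assoc]; gcongr

theorem mul_dotProduct_le_dotProduct_transpose_mul_diagonal_mul_mulVec {a c : ℝ} (ha : 0 ≤ a)
    (he : ∀ i, a ≤ e i) (hc : ∀ μ, Module.End.HasEigenvalue (toLin' (Pᵀ * P)) μ → c ≤ μ)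
    (x : n → ℝ) : a * c * (x ⬝ᵥ x) ≤ x ⬝ᵥ (Pᵀ * diagonal e * P) *ᵥ x := by
  have hPx := (isHermitian_transpose_mul_self P).mul_dotProduct_le_dotProduct_mulVec hc x
  rw [dotProduct_transpose_mul_self_mulVec] at hPx
  calc a * c * (x ⬝ᵥ x) ≤ a * (P *ᵥ x ⬝ᵥ P *ᵥ x) := by rw [mul_assoc]; gcongr
    _ ≤ P *ᵥ x ⬝ᵥ diagonal e *ᵥ (P *ᵥ x) := mul_dotProduct_le_dotProduct_diagonal_mulVec he _
    _ = x ⬝ᵥ (Pᵀ * diagonal e * P) *ᵥ x := (dotProduct_transpose_mul_mul_mulVec _ _ _).symm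

variable {s : m → ℝ} {Y : Matrix n n ℝ}

theorem transpose_mul_mul_eq_one_of_orthonormal
    (hU : (diagonal s * (P * Y))ᵀ * (diagonal s * (P * Y)) = 1) :
    Yᵀ * (Pᵀ * diagonal (fun i => s i ^ 2) * P) * Y = 1 := by
  rw [← hU, transpose_mul_self_diagonal_mul_s8, transpose_mul P Y]
  simp only [Matrix.mul_assoc]

theorem mul_sum_sq_row_le (hU : (diagonal s * (P * Y))ᵀ * (diagonal s * (P * Y)) = 1)
    {a b c : ℝ} (ha : 0 ≤ a) (hsa : ∀ j, a ≤ s j ^ 2) (hsb : ∀ j, s j ^ 2 ≤ b)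
    (hc : ∀ μ, Module.End.HasEigenvalue (toLin' (Pᵀ * P)) μ → c ≤ μ) (i : m) :
    a * c * ∑ j, (diagonal s * (P * Y)) i j ^ 2 ≤ b * (P i ⬝ᵥ P i) := by
  have ht := mul_dotProduct_vecMul_self_le (transpose_mul_mul_eq_one_of_orthonormal hU)
    (mul_dotProduct_le_dotProduct_transpose_mul_diagonal_mul_mulVec ha hsa hc) (P i)
  rw [sum_sq_diagonal_mul_apply, mul_apply_eq_vecMul]
  nlinarith [hsa i, hsb i, dotProduct_self_nonneg (P i ᵥ* Y), dotProduct_self_nonneg (P i)]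

theorem mul_dotProduct_le_sum_sq_row (hU : (diagonal s * (P * Y))ᵀ * (diagonal s * (P * Y)) = 1)
    {a b C : ℝ} (hsa : ∀ j, a ≤ s j ^ 2) (hb : 0 ≤ b) (hsb : ∀ j, s j ^ 2 ≤ b)
    (hC : ∀ μ, Module.End.HasEigenvalue (toLin' (Pᵀ * P)) μ → μ ≤ C) (i : m) :
    a * (P i ⬝ᵥ P i) ≤ b * C * ∑ j, (diagonal s * (P * Y)) i j ^ 2 := by
  have ht := dotProduct_self_le_mul_dotProduct_vecMul (transpose_mul_mul_eq_one_of_orthonormal hU)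
    (dotProduct_transpose_mul_diagonal_mul_mulVec_le hb hsb hC) (P i)
  rw [sum_sq_diagonal_mul_apply, mul_apply_eq_vecMul]
  nlinarith [hsa i, sq_nonneg (s i), dotProduct_self_nonneg (P i)]

end Diagonal

end Matrix

theorem row_norm_bounds_general {N K : ℕ}
    (τ δmin δmax : ℝ) (hτ : 0 ≤ τ) (hδmin : 0 < δmin)
    (d : Fin N → ℝ) (hd : ∀ i, τ + δmin ≤ d i ∧ d i ≤ τ + δmax)
    (Pm U : Matrix (Fin N) (Fin K) ℝ)
    (hnn : ∀ i k, 0 ≤ Pm i k) (hrow : ∀ i, ∑ k, Pm i k = 1)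
    (I : Fin K → Fin N)
    (hUo : Uᵀ * U = 1)
    (hUeq : U = Matrix.diagonal (fun i => (Real.sqrt (d i))⁻¹) * Pm *
      Matrix.diagonal (fun k => Real.sqrt (d (I k))) * U.submatrix I id)
    (lam1 lamK : ℝ)
    (hlam1 : IsGreatest {μ : ℝ |
      Module.End.HasEigenvalue (Matrix.toLin' (Pmᵀ * Pm)) μ} lam1)
    (hlamK : IsLeast {μ : ℝ |
      Module.End.HasEigenvalue (Matrix.toLin' (Pmᵀ * Pm)) μ} lamK) :
    ∀ i,
      Real.sqrt ((τ + δmin) / (τ + δmax)) * (Real.sqrt ((K : ℝ) * lam1))⁻¹ ≤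
        Real.sqrt (∑ j, (U i j) ^ 2) ∧
      Real.sqrt (∑ j, (U i j) ^ 2) ≤
        Real.sqrt ((τ + δmax) / (τ + δmin)) * (Real.sqrt lamK)⁻¹ := by
  intro i
  have ha : 0 < τ + δmin := by linarith
  have hdpos j : 0 < d j := ha.trans_le (hd j).1
  have hb : 0 < τ + δmax := (hdpos i).trans_le (hd i).2
  have hs j : (√(d j))⁻¹ ^ 2 = (d j)⁻¹ := by rw [inv_pow, Real.sq_sqrt (hdpos j).le]
  have hsa j : (τ + δmax)⁻¹ ≤ (√(d j))⁻¹ ^ 2 := hs j ▸ inv_anti₀ (hdpos j) (hd j).2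
  have hsb j : (√(d j))⁻¹ ^ 2 ≤ (τ + δmin)⁻¹ := hs j ▸ inv_anti₀ ha (hd j).1
  rw [Matrix.mul_assoc, Matrix.mul_assoc] at hUeq
  rw [hUeq] at hUo ⊢
  have hlamK_pos : 0 < lamK := pos_of_hasEigenvalue_transpose_mul_self
    (mulVec_injective_of_transpose_mul_mul_eq_one
      (transpose_mul_mul_eq_one_of_orthonormal hUo)) hlamK.1
  have hup := mul_sum_sq_row_le hUo (by positivity) hsa hsb (fun μ hμ => hlamK.2 hμ) i
  have hlow := mul_dotProduct_le_sum_sq_row hUo hsa (by positivity) hsb (fun μ hμ => hlam1.2 hμ) i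
  have hπ_le := dotProduct_self_le_one_of_sum_eq_one (hnn i) (hrow i)
  have hπ_ge := one_le_card_mul_dotProduct_self_of_sum_eq_one (hrow i)
  rw [Fintype.card_fin] at hπ_ge
  have hK : (0 : ℝ) < K := pos_of_mul_pos_left (one_pos.trans_le hπ_ge) (dotProduct_self_nonneg _)
  have hlam1_pos : 0 < lam1 := hlamK_pos.trans_le (hlamK.2 hlam1.1)
  constructor
  · rw [← Real.sqrt_inv, ← Real.sqrt_mul (by positivity)]
    refine Real.sqrt_le_sqrt ?_
    field_simp at hlow ⊢
    nlinarith
  · rw [← Real.sqrt_inv, ← Real.sqrt_mul (by positivity)]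
    refine Real.sqrt_le_sqrt ?_
    field_simp at hup ⊢
    nlinarith

/-- bounds on the row norms of `U`:
`√((τ+δmin)/(τ+δmax)) / √(K λ₁(ΠᵀΠ)) ≤ ‖U(i,:)‖₂ ≤ √((τ+δmax)/(τ+δmin)) / √(λ_K(ΠᵀΠ))`. -/
theorem row_norm_bounds {N K : ℕ}
    (τ δmin δmax : ℝ) (hτ : 0 ≤ τ) (hδmin : 0 < δmin) (hδ : δmin ≤ δmax)
    (d : Fin N → ℝ) (hd : ∀ i, τ + δmin ≤ d i ∧ d i ≤ τ + δmax)
    (Pm U : Matrix (Fin N) (Fin K) ℝ)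
    (hnn : ∀ i k, 0 ≤ Pm i k) (hrow : ∀ i, ∑ k, Pm i k = 1)
    (hPrank : Pm.rank = K)
    (I : Fin K → Fin N) (hI : Function.Injective I)
    (hpure : Pm.submatrix I id = 1)
    (hUo : Uᵀ * U = 1)
    (hUeq : U = Matrix.diagonal (fun i => (Real.sqrt (d i))⁻¹) * Pm *
      Matrix.diagonal (fun k => Real.sqrt (d (I k))) * U.submatrix I id)
    (lam1 lamK : ℝ)
    (hlam1 : IsGreatest {μ : ℝ |
      Module.End.HasEigenvalue (Matrix.toLin' (Pmᵀ * Pm)) μ} lam1)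
    (hlamK : IsLeast {μ : ℝ |
      Module.End.HasEigenvalue (Matrix.toLin' (Pmᵀ * Pm)) μ} lamK) :
    ∀ i,
      Real.sqrt ((τ + δmin) / (τ + δmax)) * (Real.sqrt ((K : ℝ) * lam1))⁻¹ ≤
        Real.sqrt (∑ j, (U i j) ^ 2) ∧
      Real.sqrt (∑ j, (U i j) ^ 2) ≤
        Real.sqrt ((τ + δmax) / (τ + δmin)) * (Real.sqrt lamK)⁻¹ :=
  row_norm_bounds_general τ δmin δmax hτ hδmin d hd Pm U hnn hrow I hUo hUeq lam1 lamK hlam1 hlamK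
end

section
/- Let L = ρ D^{-1/2} Π B' = U Σ V' be a compact rank-K SVD (U'U = V'V = I_K, Σ positive diagonal). Suppose each row of B has Euclidean norm at most 1, each row of Π has ℓ₁-norm 1 with nonnegative entries, and D is diagonal with entries at least τ+δ_min. Then for every j ∈ [J], ‖V(j,:)‖₂ ≤ ρ √K · ‖Π‖_F / (σ_K(L) √(τ+δ_min)), where σ_K(L) is the smallest nonzero singular value of L. -/
open Matrix

private lemma dot_shift {m n : ℕ} (A : Matrix (Fin m) (Fin n) ℝ) (x : Fin m → ℝ) (y : Fin n → ℝ) :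
    x ⬝ᵥ (A *ᵥ y) = (Aᵀ *ᵥ x) ⬝ᵥ y := by
  rw [Matrix.dotProduct_mulVec, Matrix.mulVec_transpose]

private lemma contraction {m n : ℕ} (U : Matrix (Fin m) (Fin n) ℝ) (hU : Uᵀ * U = 1)
    (x : Fin m → ℝ) : (Uᵀ *ᵥ x) ⬝ᵥ (Uᵀ *ᵥ x) ≤ x ⬝ᵥ x := by
  set w := Uᵀ *ᵥ x with hw
  have h1 : x ⬝ᵥ (U *ᵥ w) = w ⬝ᵥ w := by rw [dot_shift]
  have h2 : (U *ᵥ w) ⬝ᵥ (U *ᵥ w) = w ⬝ᵥ w := by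
    rw [dot_shift, Matrix.mulVec_mulVec, hU, Matrix.one_mulVec]
  have hcs : (x ⬝ᵥ (U *ᵥ w)) ^ 2 ≤ (x ⬝ᵥ x) * ((U *ᵥ w) ⬝ᵥ (U *ᵥ w)) := by
    have := Finset.sum_mul_sq_le_sq_mul_sq Finset.univ x (U *ᵥ w)
    simpa [dotProduct, pow_two, Finset.mul_sum] using this
  rw [h1, h2] at hcs
  have hwnn : 0 ≤ w ⬝ᵥ w := Finset.sum_nonneg fun i _ => mul_self_nonneg _
  rcases eq_or_lt_of_le hwnn with h0 | h0
  · rw [← h0]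
    exact Finset.sum_nonneg fun i _ => mul_self_nonneg _
  · have : (w ⬝ᵥ w) * (w ⬝ᵥ w) ≤ (x ⬝ᵥ x) * (w ⬝ᵥ w) := by nlinarith
    exact le_of_mul_le_mul_right this h0

set_option maxHeartbeats 1000000 in
/-- bound on the row norms of the right singular vectors:
`‖V(j,:)‖₂ ≤ ρ √K ‖Π‖_F / (σ_K(L) √(τ+δmin))`. -/
theorem right_singular_row_bound {N J K : ℕ}
    (ρ τ δmin : ℝ) (hρ : 0 < ρ) (hpos : 0 < τ + δmin)
    (d : Fin N → ℝ) (hd : ∀ i, τ + δmin ≤ d i)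
    (Pm : Matrix (Fin N) (Fin K) ℝ) (B : Matrix (Fin J) (Fin K) ℝ)
    (hB : ∀ j, Real.sqrt (∑ k, (B j k) ^ 2) ≤ 1)
    (hnn : ∀ i k, 0 ≤ Pm i k) (hrow : ∀ i, ∑ k, Pm i k = 1)
    (L : Matrix (Fin N) (Fin J) ℝ)
    (hL : L = ρ • (Matrix.diagonal (fun i => (Real.sqrt (d i))⁻¹) * Pm * Bᵀ))
    (U : Matrix (Fin N) (Fin K) ℝ) (s : Fin K → ℝ)
    (V : Matrix (Fin J) (Fin K) ℝ)
    (hSVD : L = U * Matrix.diagonal s * Vᵀ)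
    (hU : Uᵀ * U = 1) (hV : Vᵀ * V = 1) (hs : ∀ k, 0 < s k)
    (sK : ℝ) (hsK : IsLeast (Set.range s) sK) :
    ∀ j, Real.sqrt (∑ k, (V j k) ^ 2) ≤
      ρ * Real.sqrt (K : ℝ) * Real.sqrt (∑ i, ∑ k, (Pm i k) ^ 2) /
        (sK * Real.sqrt (τ + δmin)) := by
  intro j
  obtain ⟨k0, hk0⟩ := hsK.1
  have hK1 : (1 : ℝ) ≤ (K : ℝ) := by exact_mod_cast k0.pos
  have hsKpos : 0 < sK := hk0 ▸ hs k0
  set t := τ + δmin with ht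
  set F := ∑ i, ∑ k, (Pm i k) ^ 2 with hF
  have hFnn : 0 ≤ F := Finset.sum_nonneg fun i _ => Finset.sum_nonneg fun k _ => sq_nonneg _
  set x : Fin N → ℝ := fun i => L i j with hx
  have hUL : Uᵀ * L = Matrix.diagonal s * Vᵀ := by
    rw [hSVD, ← Matrix.mul_assoc, ← Matrix.mul_assoc, hU, Matrix.one_mul]
  have hcol : ∀ k, (Uᵀ *ᵥ x) k = s k * V j k := by
    intro k
    have h := congrFun (congrFun hUL k) j
    simpa [Matrix.mul_apply, Matrix.mulVec, dotProduct, Matrix.diagonal_apply,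
      ite_mul, Finset.sum_ite_eq] using h
  -- Step A
  have hA : sK ^ 2 * ∑ k, (V j k) ^ 2 ≤ (Uᵀ *ᵥ x) ⬝ᵥ (Uᵀ *ᵥ x) := by
    rw [Finset.mul_sum]
    simp only [dotProduct]
    apply Finset.sum_le_sum
    intro k _
    rw [hcol k, ← pow_two]
    have hle : sK ≤ s k := hsK.2 ⟨k, rfl⟩
    nlinarith [sq_nonneg (V j k), mul_le_mul hle hle hsKpos.le (le_trans hsKpos.le hle)]
  -- Step B
  have hBnd := contraction U hU x
  -- Step C
  have hbB : ∑ k, (B j k) ^ 2 ≤ 1 := by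
    have h := hB j
    nlinarith [Real.sq_sqrt (Finset.sum_nonneg (fun k _ => sq_nonneg (B j k)) :
        (0:ℝ) ≤ ∑ k, (B j k) ^ 2), Real.sqrt_nonneg (∑ k, (B j k) ^ 2)]
  have hC : x ⬝ᵥ x ≤ ρ ^ 2 / t * F := by
    have hxi : ∀ i, x i = ρ * ((Real.sqrt (d i))⁻¹ * ∑ k, Pm i k * B j k) := by
      intro i
      show L i j = _
      rw [hL, Matrix.mul_assoc]
      simp only [Matrix.smul_apply, smul_eq_mul]
      rw [Matrix.diagonal_mul, Matrix.mul_apply]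
      simp only [Matrix.transpose_apply]
    have hterm : ∀ i, x i * x i ≤ ρ ^ 2 / t * ∑ k, (Pm i k) ^ 2 := by
      intro i
      rw [hxi i]
      have hdi : 0 < d i := lt_of_lt_of_le hpos (hd i)
      have hsq : ((Real.sqrt (d i))⁻¹) ^ 2 = (d i)⁻¹ := by
        rw [inv_pow, Real.sq_sqrt hdi.le]
      have hinv : (d i)⁻¹ ≤ t⁻¹ := inv_anti₀ hpos (hd i)
      have hcs2 : (∑ k, Pm i k * B j k) ^ 2 ≤ (∑ k, (Pm i k) ^ 2) * ∑ k, (B j k) ^ 2 :=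
        Finset.sum_mul_sq_le_sq_mul_sq Finset.univ _ _
      have hPnn : 0 ≤ ∑ k, (Pm i k) ^ 2 := Finset.sum_nonneg fun k _ => sq_nonneg _
      have h1 : (∑ k, Pm i k * B j k) ^ 2 ≤ ∑ k, (Pm i k) ^ 2 := by nlinarith
      have h2 : ((Real.sqrt (d i))⁻¹) ^ 2 ≤ t⁻¹ := by rw [hsq]; exact hinv
      calc ρ * ((Real.sqrt (d i))⁻¹ * ∑ k, Pm i k * B j k) *
            (ρ * ((Real.sqrt (d i))⁻¹ * ∑ k, Pm i k * B j k))
          = ρ ^ 2 * (((Real.sqrt (d i))⁻¹) ^ 2 * (∑ k, Pm i k * B j k) ^ 2) := by ring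
        _ ≤ ρ ^ 2 * (t⁻¹ * ∑ k, (Pm i k) ^ 2) := by
            apply mul_le_mul_of_nonneg_left _ (sq_nonneg ρ)
            exact mul_le_mul h2 h1 (sq_nonneg _) (inv_nonneg.2 hpos.le)
        _ = ρ ^ 2 / t * ∑ k, (Pm i k) ^ 2 := by ring
    calc x ⬝ᵥ x = ∑ i, x i * x i := rfl
      _ ≤ ∑ i, ρ ^ 2 / t * ∑ k, (Pm i k) ^ 2 := Finset.sum_le_sum fun i _ => hterm i
      _ = ρ ^ 2 / t * F := by rw [← Finset.mul_sum]
  -- combine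
  have h := le_trans hA (le_trans hBnd hC)
  have hmain : ∑ k, (V j k) ^ 2 ≤ ρ ^ 2 * F / (sK ^ 2 * t) := by
    rw [le_div_iff₀ (by positivity : (0:ℝ) < sK ^ 2 * t)]
    have h2 : t * (sK ^ 2 * ∑ k, (V j k) ^ 2) ≤ t * (ρ ^ 2 / t * F) :=
      mul_le_mul_of_nonneg_left h hpos.le
    have h3 : t * (ρ ^ 2 / t * F) = ρ ^ 2 * F := by field_simp
    calc (∑ k, (V j k) ^ 2) * (sK ^ 2 * t) = t * (sK ^ 2 * ∑ k, (V j k) ^ 2) := by ring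
      _ ≤ t * (ρ ^ 2 / t * F) := h2
      _ = ρ ^ 2 * F := h3
  have hRHS : (0:ℝ) ≤ ρ * Real.sqrt (K : ℝ) * Real.sqrt F / (sK * Real.sqrt t) := by positivity
  apply Real.sqrt_le_sqrt at hmain
  refine le_trans hmain ?_
  rw [show ρ * Real.sqrt (K:ℝ) * Real.sqrt F / (sK * Real.sqrt t)
      = Real.sqrt ((ρ * Real.sqrt (K:ℝ) * Real.sqrt F / (sK * Real.sqrt t)) ^ 2) from
      (Real.sqrt_sq hRHS).symm]
  apply Real.sqrt_le_sqrt
  rw [show (ρ * Real.sqrt (K:ℝ) * Real.sqrt F / (sK * Real.sqrt t)) ^ 2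
      = ρ ^ 2 * (K:ℝ) * F / (sK ^ 2 * t) by
    rw [div_pow, mul_pow, mul_pow, mul_pow, Real.sq_sqrt (by positivity : (0:ℝ) ≤ (K:ℝ)),
      Real.sq_sqrt hFnn, Real.sq_sqrt hpos.le]]
  have hst : (0:ℝ) < sK ^ 2 * t := by positivity
  have hKF : ρ ^ 2 * F ≤ ρ ^ 2 * (K : ℝ) * F := by nlinarith [mul_nonneg (mul_nonneg (sq_nonneg ρ) (sub_nonneg.2 hK1)) hFnn]
  exact (div_le_div_iff_of_pos_right hst).mpr hKF
end

section
/- Let R = Π Θ' = U Σ V' be the compact rank-K SVD of R (U'U = I_K, Σ invertible), where Π ∈ ℝ^{N×K} has rank K, Θ ∈ ℝ^{J×K} has rank K, and Π(I,:) = I_K for an index set I of size K. Then U = Π U(I,:), and in particular U(I,:) = Θ' V Σ⁻¹ is invertible. -/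
open Matrix

/-!
Since `Vᵀ V = 1` and `Σ` is invertible, `R V Σ⁻¹ = U`; as `R = Π Θᵀ`, this writes `U = Π W` with
`W = Θᵀ V Σ⁻¹`. Reading off the rows `I`, where `Π` is the identity, gives `W = U(I,:)`. Finally
`(Uᵀ Π) U(I,:) = Uᵀ U = 1`, so the square matrix `U(I,:)` is invertible.
-/

namespace Matrix

variable {l m n p R : Type*} [Fintype n] [DecidableEq n] [CommRing R]

theorem eq_mul_of_mul_eq_mul_mul_transpose {P : Matrix m n R} {M : Matrix n p R}
    {U : Matrix m n R} {D : Matrix n n R} {V : Matrix p n R} [Fintype p]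
    (h : P * M = U * D * Vᵀ) (hV : Vᵀ * V = 1) (hD : IsUnit D.det) :
    U = P * (M * V * D⁻¹) := by
  rw [← Matrix.mul_assoc, ← Matrix.mul_assoc, h, Matrix.mul_assoc (U * D), hV, Matrix.mul_one,
    mul_nonsing_inv_cancel_right _ _ hD]

theorem submatrix_mul_eq_of_submatrix_eq_one {P : Matrix m n R} {r : n → m}
    (hP : P.submatrix r id = 1) (B : Matrix n l R) : (P * B).submatrix r id = B := by
  rw [submatrix_mul _ _ _ _ _ Function.bijective_id, hP, submatrix_id_id, Matrix.one_mul]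

end Matrix

theorem svd_simplex_structure_general {N J K : ℕ}
    (Pm : Matrix (Fin N) (Fin K) ℝ) (Th : Matrix (Fin J) (Fin K) ℝ)
    (I : Fin K → Fin N)
    (hpure : Pm.submatrix I id = 1)
    (U : Matrix (Fin N) (Fin K) ℝ) (s : Fin K → ℝ)
    (V : Matrix (Fin J) (Fin K) ℝ)
    (hSVD : Pm * Thᵀ = U * Matrix.diagonal s * Vᵀ)
    (hU : Uᵀ * U = 1) (hV : Vᵀ * V = 1) (hs : ∀ k, 0 < s k) :
    U = Pm * U.submatrix I id ∧
    U.submatrix I id = Thᵀ * V * (Matrix.diagonal s)⁻¹ ∧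
    IsUnit (U.submatrix I id) := by
  have hdiag : IsUnit (diagonal s).det :=
    (isUnit_iff_isUnit_det _).1 (isUnit_diagonal.2 (Pi.isUnit_iff.2 fun k => (hs k).ne'.isUnit))
  have hfactor := eq_mul_of_mul_eq_mul_mul_transpose hSVD hV hdiag
  have hrows : U.submatrix I id = Thᵀ * V * (diagonal s)⁻¹ := by
    rw [hfactor, submatrix_mul_eq_of_submatrix_eq_one hpure]
  refine ⟨hrows ▸ hfactor, hrows, IsUnit.of_mul_eq_one_right (Uᵀ * Pm) ?_⟩
  rw [Matrix.mul_assoc, hrows, ← hfactor, hU]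

/-- for the compact SVD `R = Π Θᵀ = U Σ Vᵀ` with `Π(I,:) = I_K`,
one has `U = Π U(I,:)` and `U(I,:) = Θᵀ V Σ⁻¹` is invertible. -/
theorem svd_simplex_structure {N J K : ℕ}
    (Pm : Matrix (Fin N) (Fin K) ℝ) (Th : Matrix (Fin J) (Fin K) ℝ)
    (hPrank : Pm.rank = K) (hTrank : Th.rank = K)
    (I : Fin K → Fin N) (hI : Function.Injective I)
    (hpure : Pm.submatrix I id = 1)
    (U : Matrix (Fin N) (Fin K) ℝ) (s : Fin K → ℝ)
    (V : Matrix (Fin J) (Fin K) ℝ)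
    (hSVD : Pm * Thᵀ = U * Matrix.diagonal s * Vᵀ)
    (hU : Uᵀ * U = 1) (hV : Vᵀ * V = 1) (hs : ∀ k, 0 < s k) :
    U = Pm * U.submatrix I id ∧
    U.submatrix I id = Thᵀ * V * (Matrix.diagonal s)⁻¹ ∧
    IsUnit (U.submatrix I id) :=
  svd_simplex_structure_general Pm Th I hpure U s V hSVD hU hV hs
end

section
/- Suppose U ∈ ℝ^{N×K} has orthonormal columns, all rows of U are nonzero, U = Y U(I,:) for some nonnegative N×K matrix Y with exactly K linearly independent rows indexed by I, and U_* is the row-normalized version of U. If U(I,:) is invertible, then U_*(I,:) is invertible and U_* = Y_* U_*(I,:) where Y_* = D₁ Y D₂ for some diagonal matrices D₁ (N×N, positive diagonal) and D₂ (K×K, positive diagonal). -/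
open Matrix

/-! Row normalization is left multiplication by the positive diagonal matrix `Λ⁻¹` of inverse
row norms. Hence from `U = Y U(I,:)` one gets
`Λ⁻¹ U = (Λ⁻¹ Y Λ(I)) (Λ(I)⁻¹ U(I,:)) = (Λ⁻¹ Y Λ(I)) U_*(I,:)`,
and `U_*(I,:) = Λ(I)⁻¹ U(I,:)` is invertible as a product of invertible matrices. -/

namespace Matrix

variable {m n ι α : Type*} [Fintype m] [DecidableEq m] [Fintype ι] [DecidableEq ι]

theorem submatrix_diagonal_mul [Semiring α] (d : m → α) (A : Matrix m n α) (I : ι → m) :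
    (diagonal d * A).submatrix I id = diagonal (d ∘ I) * A.submatrix I id := by
  ext k j
  simp [diagonal_mul]

theorem isUnit_submatrix_diagonal_mul [CommRing α]
    {d : m → α} {A : Matrix m ι α} {I : ι → m}
    (hd : ∀ k, IsUnit (d (I k))) (hA : IsUnit (A.submatrix I id)) :
    IsUnit ((diagonal d * A).submatrix I id) := by
  rw [submatrix_diagonal_mul]
  exact (isUnit_diagonal.2 (Pi.isUnit_iff.2 hd)).mul hA

theorem diagonal_mul_eq_mul_submatrix [Field α]
    {d : m → α} {A Y : Matrix m ι α} {I : ι → m}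
    (hd : ∀ k, d (I k) ≠ 0) (hA : A = Y * A.submatrix I id) :
    diagonal d * A =
      (diagonal d * Y * diagonal (fun k => (d (I k))⁻¹)) * (diagonal d * A).submatrix I id := by
  have hcancel : diagonal (fun k => (d (I k))⁻¹) * diagonal (d ∘ I) = 1 := by
    rw [diagonal_mul_diagonal, ← diagonal_one]
    exact congrArg diagonal (funext fun k => inv_mul_cancel₀ (hd k))
  rw [submatrix_diagonal_mul, Matrix.mul_assoc _ (diagonal _), ← Matrix.mul_assoc (diagonal _),
    hcancel, Matrix.one_mul, Matrix.mul_assoc, ← hA]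

theorem of_div_eq_diagonal_inv_mul [Field α] (A : Matrix m n α) (d : m → α) :
    of (fun i j => A i j / d i) = diagonal (fun i => (d i)⁻¹) * A := by
  ext i j
  simp [diagonal_mul, div_eq_inv_mul]

end Matrix

theorem Real.sqrt_sum_sq_pos {n : Type*} [Fintype n] {v : n → ℝ} (hv : v ≠ 0) :
    0 < √(∑ j, v j ^ 2) := by
  obtain ⟨j, hj⟩ := Function.ne_iff.1 hv
  exact Real.sqrt_pos.2 <|
    Finset.sum_pos' (fun j _ => sq_nonneg (v j)) ⟨j, Finset.mem_univ j, sq_pos_of_ne_zero hj⟩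

theorem normalized_cone_structure_general {N K : ℕ}
    (U : Matrix (Fin N) (Fin K) ℝ)
    (hrows : ∀ i, U i ≠ 0)
    (I : Fin K → Fin N)
    (Y : Matrix (Fin N) (Fin K) ℝ)
    (hUY : U = Y * U.submatrix I id)
    (hUinv : IsUnit (U.submatrix I id)) :
    let Ustar : Matrix (Fin N) (Fin K) ℝ :=
      Matrix.of fun i j => U i j / Real.sqrt (∑ j', (U i j') ^ 2)
    IsUnit (Ustar.submatrix I id) ∧
    ∃ D₁ : Fin N → ℝ, ∃ D₂ : Fin K → ℝ,
      (∀ i, 0 < D₁ i) ∧ (∀ k, 0 < D₂ k) ∧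
      Ustar = (Matrix.diagonal D₁ * Y * Matrix.diagonal D₂) *
        Ustar.submatrix I id := by
  intro Ustar
  set r : Fin N → ℝ := fun i => Real.sqrt (∑ j', (U i j') ^ 2)
  have hr : ∀ i, 0 < r i := fun i => Real.sqrt_sum_sq_pos (hrows i)
  have hrI : ∀ k, (r (I k))⁻¹ ≠ 0 := fun k => (inv_pos.2 (hr (I k))).ne'
  have hUstar : Ustar = diagonal (fun i => (r i)⁻¹) * U := of_div_eq_diagonal_inv_mul U r
  have hcone := diagonal_mul_eq_mul_submatrix (d := fun i => (r i)⁻¹) (I := I) hrI hUY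
  simp only [inv_inv] at hcone
  rw [hUstar]
  exact ⟨isUnit_submatrix_diagonal_mul (fun k => (hrI k).isUnit) hUinv,
    fun i => (r i)⁻¹, fun k => r (I k), fun i => inv_pos.2 (hr i), fun k => hr (I k), hcone⟩

/-- row normalization preserves the cone structure:
if `U = Y U(I,:)` with `Y ≥ 0`, `Y(I,:)` a positive diagonal matrix, and
`U(I,:)` invertible, then `U_*(I,:)` is invertible and `U_* = Y_* U_*(I,:)`
with `Y_* = D₁ Y D₂` for positive diagonal matrices `D₁, D₂`. -/
theorem normalized_cone_structure {N K : ℕ}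
    (U : Matrix (Fin N) (Fin K) ℝ)
    (hUo : Uᵀ * U = 1) (hrows : ∀ i, U i ≠ 0)
    (I : Fin K → Fin N) (hI : Function.Injective I)
    (Y : Matrix (Fin N) (Fin K) ℝ) (hYnn : ∀ i k, 0 ≤ Y i k)
    (g : Fin K → ℝ) (hg : ∀ k, 0 < g k)
    (hYI : Y.submatrix I id = Matrix.diagonal g)
    (hUY : U = Y * U.submatrix I id)
    (hUinv : IsUnit (U.submatrix I id)) :
    let Ustar : Matrix (Fin N) (Fin K) ℝ :=
      Matrix.of fun i j => U i j / Real.sqrt (∑ j', (U i j') ^ 2)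
    IsUnit (Ustar.submatrix I id) ∧
    ∃ D₁ : Fin N → ℝ, ∃ D₂ : Fin K → ℝ,
      (∀ i, 0 < D₁ i) ∧ (∀ k, 0 < D₂ k) ∧
      Ustar = (Matrix.diagonal D₁ * Y * Matrix.diagonal D₂) *
        Ustar.submatrix I id :=
  normalized_cone_structure_general U hrows I Y hUY hUinv
end
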